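/- arXiv:2510.12048 — 2 statements merged into one kernel-verified Lean document; each statement's English description precedes it below -/
import Mathlib

section
/- Let c > 0, let z₁, …, z_n ∈ ℝ be a sample, let μ ∈ ℝ, and let m = #{i : z_i ≠ μ}. If 0 < δ < (c²/6)·(m/n), then there exists σ > 0 solving the M-estimating equation (1/n) Σ_{i=1}^n ρ_{1,c}((z_i − μ)/σ) = δ. -/
/-- The Tukey biweight loss function with tuning constant `c`. -/
noncomputable def tukeyRho (c u : ℝ) : ℝ :=
  if |u| ≤ c then u ^ 2 / 2 * (1 - u ^ 2 / c ^ 2 + u ^ 4 / (3 * c ^ 4)) else c ^ 2 / 6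

lemma tukeyRho_continuous (c : ℝ) (hc : 0 < c) : Continuous (tukeyRho c) := by
  unfold tukeyRho
  apply Continuous.if_le
  · continuity
  · continuity
  · exact continuous_abs
  · exact continuous_const
  · intro u hu
    have h2 : u ^ 2 = c ^ 2 := by
      have := sq_abs u
      rw [hu] at this; linarith
    have h4 : u ^ 4 = c ^ 4 := by nlinarith
    rw [h2, h4]
    field_simp
    ring

lemma tukeyRho_le (c u : ℝ) (hc : 0 < c) : tukeyRho c u ≤ u ^ 2 / 2 := by
  unfold tukeyRho
  split_ifs with h
  · have h1 : u ^ 2 ≤ c ^ 2 := by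
      have := sq_abs u
      nlinarith [abs_nonneg u]
    have hc2 : (0:ℝ) < c ^ 2 := pow_pos hc 2
    have hc4 : (0:ℝ) < c ^ 4 := pow_pos hc 4
    have key : u ^ 4 / (3 * c ^ 4) ≤ u ^ 2 / c ^ 2 := by
      rw [div_le_div_iff₀ (by positivity) hc2]
      have e1 : u ^ 2 * u ^ 2 ≤ u ^ 2 * c ^ 2 := mul_le_mul_of_nonneg_left h1 (sq_nonneg u)
      nlinarith [mul_le_mul_of_nonneg_right e1 (sq_nonneg c),
        mul_nonneg (mul_nonneg (sq_nonneg u) (sq_nonneg c)) (sq_nonneg c)]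
    nlinarith [mul_nonneg (by positivity : (0:ℝ) ≤ u ^ 2 / 2)
      (by linarith : (0:ℝ) ≤ u ^ 2 / c ^ 2 - u ^ 4 / (3 * c ^ 4))]
  · push_neg at h
    have : c ^ 2 < u ^ 2 := by nlinarith [sq_abs u, abs_nonneg u]
    nlinarith [pow_pos hc 2]

lemma tukeyRho_zero (c : ℝ) (hc : 0 < c) : tukeyRho c 0 = 0 := by
  unfold tukeyRho
  rw [if_pos (by simp [abs_nonneg, le_of_lt hc])]
  ring

lemma tukeyRho_of_gt (c u : ℝ) (h : c < |u|) : tukeyRho c u = c ^ 2 / 6 := by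
  unfold tukeyRho
  rw [if_neg (not_le.mpr h)]

/-- Let `c > 0`, let `z₁, …, z_n ∈ ℝ` be a sample, let `μ ∈ ℝ`, and let
`m = #{i : z_i ≠ μ}`. If `0 < δ < (c²/6)·(m/n)`, then there exists `σ > 0` solving the
M-estimating equation `(1/n) Σ_{i=1}^n ρ_{1,c}((z_i − μ)/σ) = δ`. -/
theorem mScale_exists (c : ℝ) (hc : 0 < c) (n : ℕ) (hn : 0 < n) (z : Fin n → ℝ) (μ : ℝ)
    (δ : ℝ) (hδ : 0 < δ)
    (hδ' : δ < c ^ 2 / 6 * (((Finset.univ.filter fun i => z i ≠ μ).card : ℝ) / n)) :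
    ∃ σ : ℝ, 0 < σ ∧ (1 / n : ℝ) * ∑ i, tukeyRho c ((z i - μ) / σ) = δ := by
  classical
  set S := Finset.univ.filter fun i => z i ≠ μ with hSdef
  have hnR : (0:ℝ) < n := by exact_mod_cast hn
  -- S is nonempty
  have hSne : S.Nonempty := by
    rw [Finset.nonempty_iff_ne_empty]
    intro h
    rw [hSdef] at hδ'
    rw [← hSdef, h] at hδ'
    simp at hδ'
    linarith
  -- minimum nonzero deviation
  set a := S.inf' hSne (fun i => |z i - μ|) with hadef
  have ha : 0 < a := by
    rw [hadef]
    apply (Finset.lt_inf'_iff hSne).mpr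
    intro i hi
    have : z i ≠ μ := (Finset.mem_filter.mp hi).2
    exact abs_pos.mpr (sub_ne_zero_of_ne this)
  set σ₁ := a / (2 * c) with hσ₁def
  have hσ₁ : 0 < σ₁ := by positivity
  -- value at σ₁ is exactly c²/6 * m/n
  set f : ℝ → ℝ := fun σ => (1 / n : ℝ) * ∑ i, tukeyRho c ((z i - μ) / σ) with hfdef
  have hf₁ : f σ₁ = c ^ 2 / 6 * ((S.card : ℝ) / n) := by
    have hsum : ∑ i, tukeyRho c ((z i - μ) / σ₁) = (S.card : ℝ) * (c ^ 2 / 6) := by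
      rw [← Finset.sum_filter_add_sum_filter_not Finset.univ (fun i => z i ≠ μ)]
      have h1 : ∀ i ∈ S, tukeyRho c ((z i - μ) / σ₁) = c ^ 2 / 6 := by
        intro i hi
        apply tukeyRho_of_gt
        have hai : a ≤ |z i - μ| := Finset.inf'_le _ hi
        rw [abs_div, abs_of_pos hσ₁]
        rw [lt_div_iff₀ hσ₁, hσ₁def]
        calc c * (a / (2 * c)) = a / 2 := by field_simp
          _ < a := by linarith
          _ ≤ |z i - μ| := hai
      have h2 : ∀ i ∈ Finset.univ.filter (fun i => ¬ z i ≠ μ), tukeyRho c ((z i - μ) / σ₁) = 0 := by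
        intro i hi
        have : z i = μ := by simpa using (Finset.mem_filter.mp hi).2
        rw [this]
        simp [tukeyRho_zero c hc]
      rw [Finset.sum_congr rfl h1, Finset.sum_congr rfl h2]
      simp [mul_comm]
    rw [hfdef]
    simp only [hsum]
    ring
  -- pick σ₂ large
  set K := ∑ i, (z i - μ) ^ 2 with hKdef
  have hK0 : 0 ≤ K := Finset.sum_nonneg fun i _ => sq_nonneg _
  set σ₂ := max (σ₁ + 1) (Real.sqrt (K / (n * δ)) + 1) with hσ₂def
  have hσ₂pos : 0 < σ₂ := lt_of_lt_of_le (by linarith) (le_max_left _ _)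
  have hσ₁₂ : σ₁ < σ₂ := lt_of_lt_of_le (by linarith) (le_max_left _ _)
  have hσ₂sq : K / (n * δ) < σ₂ ^ 2 := by
    have h1 : Real.sqrt (K / (n * δ)) < σ₂ :=
      lt_of_lt_of_le (by linarith) (le_max_right _ _)
    calc K / (n * δ) = Real.sqrt (K / (n * δ)) ^ 2 :=
          (Real.sq_sqrt (by positivity)).symm
      _ < σ₂ ^ 2 := by
          apply pow_lt_pow_left₀ h1 (Real.sqrt_nonneg _) (by norm_num)
  have hf₂ : f σ₂ < δ := by
    have hbound : ∀ i : Fin n, tukeyRho c ((z i - μ) / σ₂) ≤ (z i - μ) ^ 2 / (2 * σ₂ ^ 2) := by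
      intro i
      calc tukeyRho c ((z i - μ) / σ₂) ≤ ((z i - μ) / σ₂) ^ 2 / 2 := tukeyRho_le c _ hc
        _ = (z i - μ) ^ 2 / (2 * σ₂ ^ 2) := by
            rw [div_pow]; ring
    have hsum : ∑ i, tukeyRho c ((z i - μ) / σ₂) ≤ K / (2 * σ₂ ^ 2) := by
      rw [hKdef, Finset.sum_div]
      exact Finset.sum_le_sum fun i _ => hbound i
    have : f σ₂ ≤ (1 / n : ℝ) * (K / (2 * σ₂ ^ 2)) := by
      rw [hfdef]
      apply mul_le_mul_of_nonneg_left hsum (by positivity)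
    apply lt_of_le_of_lt this
    have hσ₂sq' : K < n * δ * σ₂ ^ 2 := by
      rw [div_lt_iff₀ (by positivity)] at hσ₂sq
      linarith
    rw [div_mul_div_comm, one_mul, div_lt_iff₀ (by positivity)]
    nlinarith [sq_nonneg σ₂]
  -- continuity of f on the interval
  have hcont : ContinuousOn f (Set.Icc σ₁ σ₂) := by
    apply ContinuousOn.mul continuousOn_const
    apply continuousOn_finset_sum
    intro i _
    apply ((tukeyRho_continuous c hc).comp_continuousOn)
    apply ContinuousOn.div continuousOn_const continuousOn_id
    intro x hx
    exact ne_of_gt (lt_of_lt_of_le hσ₁ hx.1)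
  -- intermediate value theorem (f decreasing endpoints: f σ₂ < δ < f σ₁)
  have hδIcc : δ ∈ Set.Icc (f σ₂) (f σ₁) := by
    constructor
    · linarith
    · rw [hf₁]; linarith
  have := intermediate_value_Icc' (le_of_lt hσ₁₂) hcont hδIcc
  obtain ⟨σ, hσmem, hσeq⟩ := this
  exact ⟨σ, lt_of_lt_of_le hσ₁ hσmem.1, hσeq⟩
end

section
/- For every c > 0, the bias-correction term C(κ) = D(F(κ)) + D(1 − F(κ)) + D(1) of the weighted Bianco–Yohai estimator is differentiable at every κ ∈ ℝ with derivative C′(κ) = F(κ)(1 − F(κ)) [ρ₂′(−ln F(κ)) − ρ₂′(−ln(1 − F(κ)))], and it is uniformly bounded: 0 ≤ C(κ) ≤ 3 e^{−√c} for all κ ∈ ℝ. -/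
/-- The logistic function `F(u) = 1/(1 + e^{−u})`. -/
noncomputable def logisticF (u : ℝ) : ℝ := 1 / (1 + Real.exp (-u))

/-- The derivative of the Croux–Haesbroeck loss `ρ₂` with tuning constant `c`:
`ρ₂′(u) = e^{−√c}` for `u ≤ c` and `ρ₂′(u) = e^{−√u}` for `u ≥ c`. -/
noncomputable def rhoTwo' (c u : ℝ) : ℝ :=
  if u ≤ c then Real.exp (-Real.sqrt c) else Real.exp (-Real.sqrt u)

/-- The function `D(u) = ∫₀^u ρ₂′(−ln t) dt`. -/
noncomputable def biasD (c u : ℝ) : ℝ := ∫ t in (0 : ℝ)..u, rhoTwo' c (-Real.log t)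

/-- The bias-correction term `C(κ) = D(F(κ)) + D(1 − F(κ)) + D(1)` of the weighted
Bianco–Yohai estimator. -/
noncomputable def biasC (c κ : ℝ) : ℝ :=
  biasD c (logisticF κ) + biasD c (1 - logisticF κ) + biasD c 1

lemma rhoTwo'_pos (c u : ℝ) : 0 < rhoTwo' c u := by
  unfold rhoTwo'; split <;> exact Real.exp_pos _

lemma rhoTwo'_le (c u : ℝ) : rhoTwo' c u ≤ Real.exp (-Real.sqrt c) := by
  unfold rhoTwo'; split
  · exact le_refl _
  · exact Real.exp_le_exp.2 (neg_le_neg (Real.sqrt_le_sqrt (le_of_lt (lt_of_not_ge ‹_›))))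

lemma rhoTwo'_continuous (c : ℝ) : Continuous (rhoTwo' c) := by
  unfold rhoTwo'
  apply Continuous.if_le continuous_const
    (Real.continuous_exp.comp Real.continuous_sqrt.neg) continuous_id continuous_const
  intro u hu; simp only [id] at hu; simp [Function.comp, hu]

lemma g_measurable (c : ℝ) : Measurable fun t => rhoTwo' c (-Real.log t) :=
  (rhoTwo'_continuous c).measurable.comp Real.measurable_log.neg

lemma g_intervalIntegrable (c a b : ℝ) :
    IntervalIntegrable (fun t => rhoTwo' c (-Real.log t)) MeasureTheory.volume a b := by
  rw [intervalIntegrable_iff]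
  apply MeasureTheory.Integrable.mono'
    (MeasureTheory.integrableOn_const (C := Real.exp (-Real.sqrt c)) measure_Ioc_lt_top.ne)
    ((g_measurable c).aestronglyMeasurable.restrict)
  filter_upwards with t
  rw [Real.norm_eq_abs, abs_of_pos (rhoTwo'_pos c _)]
  exact rhoTwo'_le c _

lemma biasD_hasDerivAt (c : ℝ) {u : ℝ} (hu : 0 < u) :
    HasDerivAt (biasD c) (rhoTwo' c (-Real.log u)) u := by
  have hcont : ContinuousAt (fun t => rhoTwo' c (-Real.log t)) u :=
    (rhoTwo'_continuous c).continuousAt.comp ((Real.continuousAt_log hu.ne').neg)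
  exact intervalIntegral.integral_hasDerivAt_right (g_intervalIntegrable c 0 u)
    ⟨Set.univ, Filter.univ_mem, (g_measurable c).aestronglyMeasurable.restrict⟩ hcont

lemma logisticF_pos (κ : ℝ) : 0 < logisticF κ := by
  unfold logisticF; positivity

lemma logisticF_lt_one (κ : ℝ) : logisticF κ < 1 := by
  unfold logisticF
  rw [div_lt_one (by positivity)]
  linarith [Real.exp_pos (-κ)]

lemma logisticF_hasDerivAt (κ : ℝ) :
    HasDerivAt logisticF (logisticF κ * (1 - logisticF κ)) κ := by
  have hd : (0:ℝ) < 1 + Real.exp (-κ) := by positivity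
  have h1 : HasDerivAt (fun u : ℝ => 1 + Real.exp (-u)) (-Real.exp (-κ)) κ := by
    simpa using (((hasDerivAt_id κ).neg).exp.const_add 1)
  have h2 := h1.inv hd.ne'
  have heq : logisticF = fun u => (1 + Real.exp (-u))⁻¹ := by
    funext u; simp [logisticF, one_div]
  rw [heq]
  refine h2.congr_deriv ?_
  beta_reduce
  field_simp
  ring

lemma biasD_nonneg (c : ℝ) {u : ℝ} (hu : 0 ≤ u) : 0 ≤ biasD c u :=
  intervalIntegral.integral_nonneg hu (fun t _ => (rhoTwo'_pos c _).le)

lemma biasD_le (c : ℝ) {u : ℝ} (hu0 : 0 ≤ u) (hu1 : u ≤ 1) :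
    biasD c u ≤ Real.exp (-Real.sqrt c) := by
  have h := intervalIntegral.integral_mono_on hu0 (g_intervalIntegrable c 0 u)
    intervalIntegrable_const (fun t _ => rhoTwo'_le c (-Real.log t))
  rw [intervalIntegral.integral_const] at h
  calc biasD c u ≤ (u - 0) • Real.exp (-Real.sqrt c) := h
    _ = u * Real.exp (-Real.sqrt c) := by simp
    _ ≤ 1 * Real.exp (-Real.sqrt c) := by
        exact mul_le_mul_of_nonneg_right hu1 (Real.exp_pos _).le
    _ = _ := one_mul _

/-- For every `c > 0`, the bias-correction term `C(κ)` of the weighted Bianco–Yohai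
estimator is differentiable at every `κ ∈ ℝ` with derivative
`C′(κ) = F(κ)(1 − F(κ)) [ρ₂′(−ln F(κ)) − ρ₂′(−ln(1 − F(κ)))]`, and it is uniformly
bounded: `0 ≤ C(κ) ≤ 3 e^{−√c}` for all `κ ∈ ℝ`. -/
theorem biasCorrection_properties (c : ℝ) (hc : 0 < c) :
    (∀ κ : ℝ, HasDerivAt (biasC c)
      (logisticF κ * (1 - logisticF κ) *
        (rhoTwo' c (-Real.log (logisticF κ)) - rhoTwo' c (-Real.log (1 - logisticF κ)))) κ) ∧
    (∀ κ : ℝ, 0 ≤ biasC c κ ∧ biasC c κ ≤ 3 * Real.exp (-Real.sqrt c)) := by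
  constructor
  · intro κ
    have hF0 := logisticF_pos κ
    have hF1 := logisticF_lt_one κ
    have hd1 := (biasD_hasDerivAt c hF0).comp κ (logisticF_hasDerivAt κ)
    have hlin : HasDerivAt (fun κ => 1 - logisticF κ)
        (-(logisticF κ * (1 - logisticF κ))) κ := (logisticF_hasDerivAt κ).const_sub 1
    have hd2 := (biasD_hasDerivAt c (by linarith : (0:ℝ) < 1 - logisticF κ)).comp κ hlin
    have hD := (hd1.add hd2).add_const (biasD c 1)
    have heq : biasC c = fun κ => ((biasD c ∘ logisticF) κ +
        (biasD c ∘ fun κ => 1 - logisticF κ) κ) + biasD c 1 := rfl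
    rw [heq]
    refine hD.congr_deriv ?_
    ring
  · intro κ
    have hF0 := logisticF_pos κ
    have hF1 := logisticF_lt_one κ
    have h1 := biasD_nonneg c hF0.le
    have h2 := biasD_nonneg c (by linarith : (0:ℝ) ≤ 1 - logisticF κ)
    have h3 := biasD_nonneg c (by norm_num : (0:ℝ) ≤ 1)
    have h1' := biasD_le c hF0.le hF1.le
    have h2' := biasD_le c (by linarith : (0:ℝ) ≤ 1 - logisticF κ) (by linarith)
    have h3' := biasD_le c (by norm_num : (0:ℝ) ≤ 1) le_rfl
    unfold biasC
    constructor <;> linarith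
end
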